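/- Let s : ℝ/ℤ → [0,1) ⊂ ℝ be the standard section and b(x,y) = s(x)+s(y)−s(x+y) ∈ ℤ. Define for x₁,…,x₄ ∈ ℝ/ℤ: D(x₁,x₂,x₃,x₄) = s(x₂)b(x₃,x₄) − s(x₁+x₂)b(x₃,x₄) + s(x₁)b(x₂+x₃,x₄) − s(x₁)b(x₂,x₃+x₄) + s(x₁)b(x₂,x₃) (this is the image under the Bockstein, computed from s(x₁)·b(x₂,x₃) via the coboundary). Then D(x₁,x₂,x₃,x₄) = b(x₁,x₂)·b(x₃,x₄), i.e. the Bockstein of the 3-cocycle ω₁ equals the cup product b ⌣ b as integer-valued 4-cochains. -/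

import Mathlib

instance : Fact ((0 : ℝ) < 1) := ⟨one_pos⟩

/-- The canonical section `s : ℝ/ℤ → [0,1) ⊂ ℝ`. -/
noncomputable def stdSection (x : AddCircle (1 : ℝ)) : ℝ :=
  (AddCircle.equivIco 1 0 x : ℝ)

/-- The carry 2-cocycle `b(x,y) = s(x) + s(y) - s(x+y)`. -/
noncomputable def carry (x y : AddCircle (1 : ℝ)) : ℝ :=
  stdSection x + stdSection y - stdSection (x + y)

/-!
`b = δs` is the coboundary of the real cochain `s`, so `δb = 0`. The left-hand side is
`δ(s ⌣ b)`, and the Leibniz rule `δ(s ⌣ b) = δs ⌣ b - s ⌣ δb` turns it into `b ⌣ b`.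
-/

section

variable {G R : Type*} [AddSemigroup G] [CommRing R] (s : G → R)

def carryOf (x y : G) : R :=
  s x + s y - s (x + y)

theorem carryOf_cocycle (x y z : G) :
    carryOf s y z - carryOf s (x + y) z + carryOf s x (y + z) - carryOf s x y = 0 := by
  simp only [carryOf, add_assoc]
  ring

theorem coboundary_mul_carryOf (x₁ x₂ x₃ x₄ : G) :
    s x₂ * carryOf s x₃ x₄
      - s (x₁ + x₂) * carryOf s x₃ x₄
      + s x₁ * carryOf s (x₂ + x₃) x₄
      - s x₁ * carryOf s x₂ (x₃ + x₄)
      + s x₁ * carryOf s x₂ x₃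
    = carryOf s x₁ x₂ * carryOf s x₃ x₄ :=
  calc _ = carryOf s x₁ x₂ * carryOf s x₃ x₄
        - s x₁ * (carryOf s x₃ x₄ - carryOf s (x₂ + x₃) x₄
          + carryOf s x₂ (x₃ + x₄) - carryOf s x₂ x₃) := by
          simp only [carryOf]
          ring
    _ = _ := by rw [carryOf_cocycle, mul_zero, sub_zero]

end

/-- The Bockstein of the 3-cocycle `ω₁` equals the cup product `b ⌣ b`. -/
theorem bockstein_eq_cup (x₁ x₂ x₃ x₄ : AddCircle (1 : ℝ)) :
    stdSection x₂ * carry x₃ x₄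
      - stdSection (x₁ + x₂) * carry x₃ x₄
      + stdSection x₁ * carry (x₂ + x₃) x₄
      - stdSection x₁ * carry x₂ (x₃ + x₄)
      + stdSection x₁ * carry x₂ x₃
    = carry x₁ x₂ * carry x₃ x₄ :=
  coboundary_mul_carryOf stdSection x₁ x₂ x₃ x₄
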